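/- Let 0 < R < π. The infimum of the incompressible-flow resistance R₂[u] = 2π ∫₀^R e^{−2u(θ)} sin θ/(1 + u'(θ)²) dθ over all continuously differentiable functions u : [0,R] → ℝ with u ≥ 0 and u(R) = 0 equals 0, and the infimum is not attained: every such u satisfies R₂[u] > 0, while along the radial cones u_k(θ) = k(R−θ) one has R₂[u_k] = 2π(2k sin R − cos R + e^{−2kR})/((1+k²)(1+4k²)) → 0 as k → ∞. -/

import Mathlib

open Real Filter Set

/-- The incompressible-flow resistance of the rotationally symmetric radial graph
`ρ(θ) = exp (u θ)`, `θ ∈ [0,R]`: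
`R₂[u] = 2π ∫₀ᴿ exp (−2u(θ)) sin θ / (1 + u'(θ)²) dθ`. -/
noncomputable def res2 (R : ℝ) (u : ℝ → ℝ) : ℝ :=
  2 * π * ∫ θ in (0:ℝ)..R, Real.exp (-2 * u θ) * Real.sin θ / (1 + (deriv u θ) ^ 2)

/-- Continuously differentiable profiles on `[0,R]` with `u ≥ 0` and `u(R) = 0`. -/
def Admissible2 (R : ℝ) (u : ℝ → ℝ) : Prop :=
  ContDiffOn ℝ 1 u (Set.Icc 0 R) ∧ (∀ θ ∈ Set.Icc 0 R, 0 ≤ u θ) ∧ u R = 0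

open MeasureTheory in
lemma aux_res2_pos (R : ℝ) (hR0 : 0 < R) (hRpi : R < π) (u : ℝ → ℝ)
    (hu : Admissible2 R u) : 0 < res2 R u := by
  set f : ℝ → ℝ := fun θ => Real.exp (-2 * u θ) * Real.sin θ / (1 + (deriv u θ) ^ 2) with hf
  have hmeas : AEStronglyMeasurable f (volume.restrict (Set.Ioc 0 R)) := by
    have hu' : AEMeasurable u (volume.restrict (Set.Ioc 0 R)) :=
      (hu.1.continuousOn.mono Set.Ioc_subset_Icc_self).aemeasurable measurableSet_Ioc
    have h1 : AEMeasurable (fun θ => Real.exp (-2 * u θ) * Real.sin θ)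
        (volume.restrict (Set.Ioc 0 R)) :=
      ((Real.measurable_exp.comp_aemeasurable (hu'.const_mul (-2))).mul
        (Real.measurable_sin.aemeasurable))
    have h2 : Measurable (fun θ => 1 + (deriv u θ) ^ 2) :=
      (measurable_const.add ((measurable_deriv u).pow_const 2))
    exact (h1.div h2.aemeasurable).aestronglyMeasurable
  have hbd : ∀ᵐ θ ∂(volume.restrict (Set.Ioc 0 R)), ‖f θ‖ ≤ 1 := by
    rw [ae_restrict_iff' measurableSet_Ioc]
    filter_upwards with θ hθ
    have hθ' : θ ∈ Set.Icc 0 R := Set.Ioc_subset_Icc_self hθ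
    have h0 : 0 ≤ Real.sin θ := Real.sin_nonneg_of_nonneg_of_le_pi hθ'.1
      (hθ'.2.trans hRpi.le)
    have hexp : Real.exp (-2 * u θ) ≤ 1 := by
      apply Real.exp_le_one_iff.2
      have := hu.2.1 θ hθ'
      nlinarith
    have hden : (1:ℝ) ≤ 1 + (deriv u θ)^2 := by nlinarith [sq_nonneg (deriv u θ)]
    have hnn : 0 ≤ f θ :=
      div_nonneg (mul_nonneg (Real.exp_pos _).le h0) (by linarith)
    rw [Real.norm_eq_abs, abs_of_nonneg hnn]
    rw [hf]
    rw [div_le_one (by linarith)]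
    nlinarith [Real.sin_le_one θ, (Real.exp_pos (-2*u θ)).le]
  have hint : IntervalIntegrable f volume 0 R := by
    rw [intervalIntegrable_iff_integrableOn_Ioc_of_le hR0.le]
    exact ⟨hmeas, HasFiniteIntegral.restrict_of_bounded (C := 1)
      measure_Ioc_lt_top hbd⟩
  have hpos : ∀ θ ∈ Set.Ioo 0 R, 0 < f θ := by
    intro θ hθ
    have hs : 0 < Real.sin θ := Real.sin_pos_of_pos_of_lt_pi hθ.1 (hθ.2.trans hRpi)
    have : (0:ℝ) < 1 + (deriv u θ)^2 := by nlinarith [sq_nonneg (deriv u θ)]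
    exact div_pos (mul_pos (Real.exp_pos _) hs) this
  have := intervalIntegral.intervalIntegral_pos_of_pos_on hint hpos hR0
  unfold res2
  have h2pi : (0:ℝ) < 2 * π := by positivity
  exact mul_pos h2pi this

lemma aux_cone_res (R k : ℝ) (hk : 0 < k) :
    res2 R (fun θ => k * (R - θ)) =
      2 * π * (2 * k * Real.sin R - Real.cos R + Real.exp (-2 * k * R)) /
        ((1 + k ^ 2) * (1 + 4 * k ^ 2)) := by
  have hd : ∀ θ : ℝ, deriv (fun θ => k * (R - θ)) θ = -k := by
    intro θ
    have : HasDerivAt (fun θ => k * (R - θ)) (k * (0 - 1)) θ :=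
      ((hasDerivAt_const θ R).sub (hasDerivAt_id θ)).const_mul k
    simpa using this.deriv
  have hne : (1+4*k^2) ≠ 0 := by positivity
  have hne2 : (1+k^2) ≠ 0 := by positivity
  have hF : ∀ θ ∈ Set.uIcc (0:ℝ) R,
      HasDerivAt (fun θ => Real.exp (2*k*(θ-R)) * (2*k*Real.sin θ - Real.cos θ) /
        ((1+4*k^2)*(1+k^2)))
      (Real.exp (-2*(k*(R-θ))) * Real.sin θ / (1 + (-k)^2)) θ := by
    intro θ _
    have h1 : HasDerivAt (fun θ => Real.exp (2*k*(θ-R))) (2*k*Real.exp (2*k*(θ-R))) θ := by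
      have : HasDerivAt (fun θ : ℝ => 2*k*(θ-R)) (2*k) θ := by
        simpa using (((hasDerivAt_id θ).sub (hasDerivAt_const θ R)).const_mul (2*k))
      simpa [mul_comm] using this.exp
    have h2 : HasDerivAt (fun θ => 2*k*Real.sin θ - Real.cos θ)
        (2*k*Real.cos θ + Real.sin θ) θ := by
      exact (((Real.hasDerivAt_sin θ).const_mul (2*k)).sub (Real.hasDerivAt_cos θ)).congr_deriv (by ring)
    have h3 := (h1.mul h2).div_const ((1+4*k^2)*(1+k^2))
    refine h3.congr_deriv ?_
    have e : -2*(k*(R-θ)) = 2*k*(θ-R) := by ring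
    rw [e]
    field_simp
    ring
  have hcont : ContinuousOn
      (fun θ => Real.exp (-2*(k*(R-θ))) * Real.sin θ / (1 + (-k)^2)) (Set.uIcc 0 R) := by
    apply Continuous.continuousOn
    have hden : (1 + (-k)^2) ≠ 0 := by positivity
    continuity
  have key := intervalIntegral.integral_eq_sub_of_hasDerivAt hF
    (hcont.intervalIntegrable)
  unfold res2
  rw [show (∫ θ in (0:ℝ)..R, Real.exp (-2 * (k * (R - θ))) * Real.sin θ /
      (1 + (deriv (fun θ => k * (R - θ)) θ) ^ 2)) =
      ∫ θ in (0:ℝ)..R, Real.exp (-2*(k*(R-θ))) * Real.sin θ / (1 + (-k)^2) from by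
    apply intervalIntegral.integral_congr; intro θ _; simp only [hd]]
  rw [key]
  have e1 : 2*k*(R-R) = 0 := by ring
  have e2 : 2*k*((0:ℝ)-R) = -2*k*R := by ring
  rw [e1, e2, Real.exp_zero]
  simp only [Real.sin_zero, Real.cos_zero]
  rw [eq_div_iff (by positivity : ((1+k^2)*(1+4*k^2) : ℝ) ≠ 0)]
  field_simp
  ring

lemma aux_tendsto (R : ℝ) (hR0 : 0 < R) :
    Tendsto (fun k : ℝ =>
        2 * π * (2 * k * Real.sin R - Real.cos R + Real.exp (-2 * k * R)) /
          ((1 + k ^ 2) * (1 + 4 * k ^ 2)))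
      atTop (nhds 0) := by
  have hg : Tendsto (fun k : ℝ =>
      2 * π * (2 * Real.sin R - Real.cos R * (1/k) + Real.exp (-2*k*R) * (1/k)))
      atTop (nhds (2 * π * (2 * Real.sin R - Real.cos R * 0 + 0 * 0))) := by
    apply Tendsto.const_mul
    have h1 : Tendsto (fun k : ℝ => 1/k) atTop (nhds 0) := by
      simpa using tendsto_inv_atTop_zero
    have h2 : Tendsto (fun k : ℝ => Real.exp (-2*k*R)) atTop (nhds 0) := by
      apply Real.tendsto_exp_atBot.comp
      have : Tendsto (fun k : ℝ => k * (-2*R)) atTop atBot :=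
        tendsto_id.atTop_mul_const_of_neg (by linarith)
      refine this.congr (fun k => by ring)
    exact (tendsto_const_nhds.sub (tendsto_const_nhds.mul h1)).add (h2.mul h1)
  have hh : Tendsto (fun k : ℝ => (1 + k ^ 2) * (1 + 4 * k ^ 2) / k) atTop atTop := by
    apply tendsto_atTop_mono' atTop ?_ (tendsto_id (α := ℝ))
    filter_upwards [eventually_ge_atTop (1:ℝ)] with k hk
    have hk0 : (0:ℝ) < k := by linarith
    rw [id, le_div_iff₀ hk0]
    nlinarith
  have heq : (fun k : ℝ =>
      2 * π * (2 * k * Real.sin R - Real.cos R + Real.exp (-2 * k * R)) /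
        ((1 + k ^ 2) * (1 + 4 * k ^ 2))) =ᶠ[atTop]
      (fun k : ℝ =>
      (2 * π * (2 * Real.sin R - Real.cos R * (1/k) + Real.exp (-2*k*R) * (1/k))) /
        ((1 + k ^ 2) * (1 + 4 * k ^ 2) / k)) := by
    filter_upwards [eventually_gt_atTop (0:ℝ)] with k hk
    have hk0 : k ≠ 0 := ne_of_gt hk
    have hd : ((1 + k ^ 2) * (1 + 4 * k ^ 2) : ℝ) ≠ 0 := by positivity
    field_simp
  rw [tendsto_congr' heq]
  simpa using hg.div_atTop hh

theorem stmt_14 (R : ℝ) (hR0 : 0 < R) (hRpi : R < π) :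
    IsGLB {r : ℝ | ∃ u : ℝ → ℝ, Admissible2 R u ∧ r = res2 R u} 0 ∧
    (∀ u : ℝ → ℝ, Admissible2 R u → 0 < res2 R u) ∧
    (∀ k : ℝ, 0 < k →
      res2 R (fun θ => k * (R - θ)) =
        2 * π * (2 * k * Real.sin R - Real.cos R + Real.exp (-2 * k * R)) /
          ((1 + k ^ 2) * (1 + 4 * k ^ 2))) ∧
    Tendsto (fun k : ℝ =>
        2 * π * (2 * k * Real.sin R - Real.cos R + Real.exp (-2 * k * R)) /
          ((1 + k ^ 2) * (1 + 4 * k ^ 2)))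
      atTop (nhds 0) := by
  have hadm : ∀ k : ℝ, 0 < k → Admissible2 R (fun θ => k * (R - θ)) := by
    intro k hk
    refine ⟨(contDiff_const.mul (contDiff_const.sub contDiff_id)).contDiffOn, ?_, by simp⟩
    intro θ hθ
    exact mul_nonneg hk.le (by linarith [hθ.2])
  refine ⟨⟨?_, ?_⟩, fun u hu => aux_res2_pos R hR0 hRpi u hu,
    fun k hk => aux_cone_res R k hk, aux_tendsto R hR0⟩
  · rintro r ⟨u, hu, rfl⟩
    exact (aux_res2_pos R hR0 hRpi u hu).le
  · intro b hb
    refine ge_of_tendsto (aux_tendsto R hR0) ?_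
    filter_upwards [eventually_gt_atTop (0:ℝ)] with k hk
    have hmem : res2 R (fun θ => k * (R - θ)) ∈
        {r : ℝ | ∃ u : ℝ → ℝ, Admissible2 R u ∧ r = res2 R u} :=
      ⟨_, hadm k hk, rfl⟩
    have := hb hmem
    rwa [aux_cone_res R k hk] at this
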